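/- arXiv:1302.4466 — 3 statements merged into one kernel-verified Lean document; each statement's English description precedes it below -/
import Mathlib

section
/- Let ρ be a finite positive Borel measure on [0,∞), a ∈ ℝ, and u(z) = a + ∫_{[0,∞)} (1+zs)/(z−s) dρ(s) for z in the upper half-plane. Let t > 1, r > 0 and 0 < θ ≤ φ < π. If −Im u(re^{iθ}) < θ/(t−1), then −Im u(re^{iφ}) < φ/(t−1). Consequently, whenever re^{iθ} lies in Ω_t = {re^{iθ} : r > 0, A_t(r) < θ < π}, the whole arc {re^{iφ} : θ ≤ φ < π} is contained in Ω_t. -/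
open MeasureTheory Filter

/-- u(z) = a + ∫ (1+zs)/(z−s) dρ(s). -/
noncomputable def ufun (ρ : Measure ℝ) (a : ℝ) (z : ℂ) : ℂ :=
  (a : ℂ) + ∫ s : ℝ, (1 + z * (s : ℂ)) / (z - (s : ℂ)) ∂ρ

/-- A_t(r) = inf{θ ∈ (0,π) : −Im u(re^{iθ})/θ < 1/(t−1)}. -/
noncomputable def At (ρ : Measure ℝ) (a t r : ℝ) : ℝ :=
  sInf {θ : ℝ | θ ∈ Set.Ioo 0 Real.pi ∧
    -(ufun ρ a ((r : ℂ) * Complex.exp ((θ : ℂ) * Complex.I))).im / θ < 1 / (t - 1)}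

/-- Ω_t = {re^{iθ} : r > 0, A_t(r) < θ < π}. -/
def Omegat (ρ : Measure ℝ) (a t : ℝ) : Set ℂ :=
  {z : ℂ | ∃ r θ : ℝ, 0 < r ∧ At ρ a t r < θ ∧ θ < Real.pi ∧
    z = (r : ℂ) * Complex.exp ((θ : ℂ) * Complex.I)}

/-- For `Im z > 0`, the integrand is integrable w.r.t. any finite measure. -/
lemma integrable_aux (ρ : Measure ℝ) [IsFiniteMeasure ρ] (z : ℂ) (hz : 0 < z.im) :
    Integrable (fun s : ℝ => (1 + z * (s:ℂ)) / (z - (s:ℂ))) ρ := by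
  have hne : ∀ s : ℝ, z - (s:ℂ) ≠ 0 := by
    intro s h
    have := congrArg Complex.im h
    simp at this; linarith
  have hdec : ∀ s : ℝ, (1 + z * (s:ℂ)) / (z - (s:ℂ)) = -z + (1 + z^2) / (z - (s:ℂ)) := by
    intro s
    field_simp [hne s]
    ring
  have hcont : Continuous (fun s : ℝ => (1 + z * (s:ℂ)) / (z - (s:ℂ))) := by
    apply Continuous.div (by continuity) (by continuity) (fun s => hne s)
  apply Integrable.mono' (g := fun _ => ‖z‖ + ‖1 + z^2‖ / z.im) (integrable_const _)
    hcont.aestronglyMeasurable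
  filter_upwards with s
  rw [hdec s]
  have h1 : ‖(1 + z^2) / (z - (s:ℂ))‖ ≤ ‖1 + z^2‖ / z.im := by
    rw [norm_div]
    apply div_le_div_of_nonneg_left (norm_nonneg _) hz
    calc z.im = (z - (s:ℂ)).im := by simp
    _ ≤ |(z - (s:ℂ)).im| := le_abs_self _
    _ ≤ ‖z - (s:ℂ)‖ := Complex.abs_im_le_norm _
  calc ‖-z + (1 + z^2) / (z - (s:ℂ))‖ ≤ ‖-z‖ + ‖(1+z^2)/(z - (s:ℂ))‖ := norm_add_le _ _
  _ ≤ ‖z‖ + ‖1 + z^2‖ / z.im := by rw [norm_neg]; exact add_le_add le_rfl h1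

lemma im_integrand (z : ℂ) (s : ℝ) : ((1 + z * (s:ℂ)) / (z - (s:ℂ))).im
    = -(z.im * (1 + s^2)) / Complex.normSq (z - (s:ℂ)) := by
  rw [Complex.div_im]
  simp [Complex.normSq_apply]
  ring

lemma neg_im_ufun (ρ : Measure ℝ) [IsFiniteMeasure ρ] (a : ℝ) (z : ℂ) (hz : 0 < z.im) :
    -(ufun ρ a z).im = ∫ s : ℝ, z.im * (1 + s^2) / Complex.normSq (z - (s:ℂ)) ∂ρ := by
  have hint := integrable_aux ρ z hz
  have h1 : (ufun ρ a z).im = ∫ s : ℝ, ((1 + z * (s:ℂ)) / (z - (s:ℂ))).im ∂ρ := by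
    rw [ufun]
    rw [Complex.add_im, Complex.ofReal_im, zero_add]
    exact (integral_im hint).symm
  rw [h1, ← integral_neg]
  congr 1
  ext s
  rw [im_integrand]
  ring

lemma theta_sin_le (θ φ : ℝ) (h0 : 0 < θ) (h1 : θ ≤ φ) (h2 : φ ≤ Real.pi) :
    θ * Real.sin φ ≤ φ * Real.sin θ := by
  have hφ : 0 < φ := lt_of_lt_of_le h0 h1
  have key : (1 - θ/φ) • Real.sin 0 + (θ/φ) • Real.sin φ
      ≤ Real.sin ((1 - θ/φ) • (0:ℝ) + (θ/φ) • φ) :=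
    strictConcaveOn_sin_Icc.concaveOn.2 ⟨le_rfl, Real.pi_pos.le⟩ ⟨hφ.le, h2⟩
      (by have : θ/φ ≤ 1 := (div_le_one hφ).2 h1; linarith)
      (by positivity) (by ring)
  simp only [smul_eq_mul, Real.sin_zero, mul_zero, zero_add,
    div_mul_cancel₀ _ hφ.ne'] at key
  calc θ * Real.sin φ = φ * (θ/φ * Real.sin φ) := by field_simp
  _ ≤ φ * Real.sin θ := by nlinarith

theorem stmt10 (ρ : Measure ℝ) [IsFiniteMeasure ρ] (hρ : ρ (Set.Iio 0) = 0)
    (a t : ℝ) (ht : 1 < t) :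
    (∀ r θ φ : ℝ, 0 < r → 0 < θ → θ ≤ φ → φ < Real.pi →
      -(ufun ρ a ((r : ℂ) * Complex.exp ((θ : ℂ) * Complex.I))).im < θ / (t - 1) →
      -(ufun ρ a ((r : ℂ) * Complex.exp ((φ : ℂ) * Complex.I))).im < φ / (t - 1)) ∧
    (∀ r θ φ : ℝ, 0 < r → At ρ a t r < θ → θ < Real.pi → θ ≤ φ → φ < Real.pi →
      (r : ℂ) * Complex.exp ((φ : ℂ) * Complex.I) ∈ Omegat ρ a t) := by
  have hae : ∀ᵐ s ∂ρ, (0:ℝ) ≤ s := by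
    rw [ae_iff]
    convert hρ using 2
    ext s; simp [not_le]
  constructor
  · intro r θ φ hr hθ hθφ hφπ hlt
    have hφ : 0 < φ := lt_of_lt_of_le hθ hθφ
    have hθπ : θ < Real.pi := lt_of_le_of_lt hθφ hφπ
    set zθ : ℂ := (r : ℂ) * Complex.exp ((θ : ℂ) * Complex.I) with hzθ
    set zφ : ℂ := (r : ℂ) * Complex.exp ((φ : ℂ) * Complex.I) with hzφ
    have him : ∀ ψ : ℝ, ((r : ℂ) * Complex.exp ((ψ : ℂ) * Complex.I)).im = r * Real.sin ψ := by
      intro ψ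
      simp [Complex.exp_mul_I, Complex.mul_im, Complex.mul_re, Complex.sin_ofReal_re,
        Complex.cos_ofReal_re]
    have hsθ : 0 < Real.sin θ := Real.sin_pos_of_pos_of_lt_pi hθ hθπ
    have hsφ : 0 < Real.sin φ := Real.sin_pos_of_pos_of_lt_pi hφ hφπ
    have hizθ : 0 < zθ.im := by rw [hzθ, him]; positivity
    have hizφ : 0 < zφ.im := by rw [hzφ, him]; positivity
    have hintθ := integrable_aux ρ zθ hizθ
    have hintφ := integrable_aux ρ zφ hizφ
    -- integrability of the imaginary-part integrands with constant multiples
    have hII : ∀ (z : ℂ) (c : ℝ), 0 < z.im →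
        Integrable (fun s : ℝ => c * (z.im * (1 + s^2) / Complex.normSq (z - (s:ℂ)))) ρ := by
      intro z c hz
      have h := ((integrable_aux ρ z hz).im.neg).const_mul c
      apply h.congr
      filter_upwards with s
      simp only [Pi.neg_apply, RCLike.im_to_complex]
      rw [im_integrand]
      ring
    -- key pointwise inequality and integral inequality
    have key : θ * (-(ufun ρ a zφ).im) ≤ φ * (-(ufun ρ a zθ).im) := by
      rw [neg_im_ufun ρ a zθ hizθ, neg_im_ufun ρ a zφ hizφ,
        ← integral_const_mul, ← integral_const_mul]
      apply integral_mono_ae (hII zφ θ hizφ) (hII zθ φ hizθ)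
      filter_upwards [hae] with s hs
      have hreim : ∀ ψ : ℝ, Complex.normSq ((r : ℂ) * Complex.exp ((ψ : ℂ) * Complex.I) - (s:ℂ))
          = r^2 - 2*r*s*Real.cos ψ + s^2 := by
        intro ψ
        rw [Complex.normSq_apply]
        simp only [Complex.sub_re, Complex.sub_im, Complex.ofReal_re, Complex.ofReal_im, him ψ]
        have hre : ((r : ℂ) * Complex.exp ((ψ : ℂ) * Complex.I)).re = r * Real.cos ψ := by
          simp [Complex.exp_mul_I, Complex.mul_im, Complex.mul_re, Complex.sin_ofReal_re,
            Complex.cos_ofReal_re]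
        rw [hre]
        have := Real.sin_sq_add_cos_sq ψ
        nlinarith
      have hDθpos : 0 < Complex.normSq (zθ - (s:ℂ)) := by
        apply Complex.normSq_pos.2
        intro h
        have := congrArg Complex.im h
        simp at this
        rw [him θ] at this
        nlinarith
      have hDle : Complex.normSq (zθ - (s:ℂ)) ≤ Complex.normSq (zφ - (s:ℂ)) := by
        rw [hzθ, hzφ, hreim θ, hreim φ]
        have : Real.cos φ ≤ Real.cos θ :=
          Real.cos_le_cos_of_nonneg_of_le_pi hθ.le hφπ.le hθφ
        nlinarith [mul_nonneg (mul_nonneg hr.le hs) (sub_nonneg.2 this)]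
      have hnum : θ * (zφ.im * (1 + s^2)) ≤ φ * (zθ.im * (1 + s^2)) := by
        rw [hzθ, hzφ, him θ, him φ]
        have := theta_sin_le θ φ hθ hθφ hφπ.le
        nlinarith [mul_le_mul_of_nonneg_right this (by positivity : (0:ℝ) ≤ r * (1 + s^2))]
      calc θ * (zφ.im * (1 + s^2) / Complex.normSq (zφ - (s:ℂ)))
          = θ * (zφ.im * (1 + s^2)) / Complex.normSq (zφ - (s:ℂ)) := by ring
        _ ≤ φ * (zθ.im * (1 + s^2)) / Complex.normSq (zθ - (s:ℂ)) := by
            have hpos : 0 ≤ φ * (zθ.im * (1 + s^2)) := by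
              rw [hzθ, him θ]
              have h5 : (0:ℝ) < 1 + s^2 := by positivity
              nlinarith [mul_pos hφ (mul_pos (mul_pos hr hsθ) h5)]
            exact div_le_div₀ hpos hnum hDθpos hDle
        _ = φ * (zθ.im * (1 + s^2) / Complex.normSq (zθ - (s:ℂ))) := by ring
    have ht1 : 0 < t - 1 := by linarith
    have h2 : -(ufun ρ a zθ).im < θ / (t - 1) := hlt
    have h2' := (lt_div_iff₀ ht1).1 h2
    rw [lt_div_iff₀ ht1]
    nlinarith [mul_le_mul_of_nonneg_right key ht1.le, mul_lt_mul_of_pos_left h2' hφ]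
  · intro r θ φ hr hAt hθπ hθφ hφπ
    exact ⟨r, φ, hr, lt_of_lt_of_le hAt hθφ, hφπ, rfl⟩
end

section
/- Let μ be a Borel probability measure on [0,∞) with μ ≠ δ₀. For x > 0 put ψ_μ(−x) = ∫_{[0,∞)} (−xs)/(1+xs) dμ(s); then ψ_μ(−x) ∈ (−1,0) for x > 0, and lim_{x→+∞} (1/x)·log( x·(1+ψ_μ(−x)) / (−ψ_μ(−x)) ) = 0. (Equivalently, writing κ_μ(z) = z/η_μ(z) with η_μ = ψ_μ/(1+ψ_μ), one has log κ_μ(−x)/x → 0 as x → +∞.) -/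
/-
Write `ψ(x)` for `psiNeg μ x`. For `μ` on `[0, ∞)`, `-ψ(x) = ∫ xs/(1+xs) dμ` and
`1 + ψ(x) = ∫ 1/(1+xs) dμ` have nonnegative integrands, the first nonzero on `(0, ∞)`; this
gives `ψ(x) ∈ (-1, 0)` as soon as `μ ≠ δ₀`. Both `-ψ(x)` and `x(1 + ψ(x)) = ∫ x/(1+xs) dμ` are
nondecreasing in `x`, while `-ψ(x) ≤ 1` and `1 + ψ(x) ≤ 1`. So for `x ≥ 1`,
`κ(x) = x(1 + ψ(x))/(-ψ(x))` lies between the constant `1 + ψ(1)` and the linear function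
`x / (-ψ(1))`, and `log κ(x) / x → 0`.
-/

open MeasureTheory Filter

/-- ψ_μ(−x) for x > 0, as a real integral: ∫ (−xs)/(1+xs) dμ(s). -/
noncomputable def psiNeg (μ : Measure ℝ) (x : ℝ) : ℝ :=
  ∫ s : ℝ, (-x * s) / (1 + x * s) ∂μ

open Set Topology

theorem MeasureTheory.Measure.eq_dirac_of_ae_eq {α : Type*} [MeasurableSpace α]
    [MeasurableSingletonClass α] {μ : Measure α} [IsProbabilityMeasure μ] {a : α}
    (h : ∀ᵐ x ∂μ, x = a) : μ = Measure.dirac a := by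
  calc μ = μ.restrict {a} := (Measure.restrict_eq_self_of_ae_mem h).symm
    _ = μ {a} • Measure.dirac a := Measure.restrict_singleton μ a
    _ = Measure.dirac a := by
      rw [(prob_compl_eq_zero_iff (measurableSet_singleton a)).mp (mem_ae_iff.mp h), one_smul]

theorem tendsto_inv_mul_log_of_mem_Icc {f : ℝ → ℝ} {a b : ℝ} (ha : 0 < a) (hb : 0 < b)
    (hf : ∀ᶠ x in atTop, f x ∈ Icc a (b * x)) :
    Tendsto (fun x => (1 / x) * Real.log (f x)) atTop (𝓝 0) := by
  have h_lower : Tendsto (fun x : ℝ => (1 / x) * Real.log a) atTop (𝓝 0) := by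
    simpa using tendsto_inv_atTop_zero.mul_const (Real.log a)
  have h_upper : Tendsto (fun x : ℝ => (1 / x) * (Real.log b + Real.log x)) atTop (𝓝 0) := by
    have h_log : Tendsto (fun x : ℝ => Real.log x / x) atTop (𝓝 0) :=
      Real.isLittleO_log_id_atTop.tendsto_div_nhds_zero
    simpa [mul_add, div_eq_inv_mul] using
      (tendsto_inv_atTop_zero.mul_const (Real.log b)).add h_log
  refine tendsto_of_tendsto_of_tendsto_of_le_of_le' h_lower h_upper ?_ ?_
  · filter_upwards [hf, eventually_gt_atTop 0] with x ⟨hax, _⟩ hx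
    gcongr
  · filter_upwards [hf, eventually_gt_atTop 0] with x ⟨hax, hbx⟩ hx
    rw [← Real.log_mul hb.ne' hx.ne']
    gcongr
    linarith

theorem ae_nonneg_of_measure_Iio_eq_zero {μ : Measure ℝ} (h : μ (Iio 0) = 0) :
    ∀ᵐ s ∂μ, 0 ≤ s := by
  rw [ae_iff]
  simp only [not_le]
  exact h

/-- `κ_μ(-x) = -x / η_μ(-x)` with `η_μ = ψ_μ / (1 + ψ_μ)`. -/
noncomputable def kappaNeg (μ : Measure ℝ) (x : ℝ) : ℝ :=
  x * (1 + psiNeg μ x) / -psiNeg μ x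

section

variable {μ : Measure ℝ} {x : ℝ}

theorem neg_psiNeg_eq_integral (μ : Measure ℝ) (x : ℝ) :
    -psiNeg μ x = ∫ s, x * s / (1 + x * s) ∂μ := by
  rw [psiNeg, ← integral_neg]
  simp only [neg_mul, neg_div, neg_neg]

theorem integrable_mul_div_one_add_mul [IsFiniteMeasure μ] (hs : ∀ᵐ s ∂μ, 0 ≤ s) (hx : 0 ≤ x) :
    Integrable (fun s => x * s / (1 + x * s)) μ := by
  refine .of_bound (Measurable.aestronglyMeasurable (by fun_prop)) 1 ?_
  filter_upwards [hs] with s hs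
  rw [Real.norm_of_nonneg (by positivity), div_le_one (by positivity)]
  linarith

theorem integrable_one_div_one_add_mul [IsFiniteMeasure μ] (hs : ∀ᵐ s ∂μ, 0 ≤ s) (hx : 0 ≤ x) :
    Integrable (fun s => 1 / (1 + x * s)) μ := by
  refine .of_bound (Measurable.aestronglyMeasurable (by fun_prop)) 1 ?_
  filter_upwards [hs] with s hs
  rw [Real.norm_of_nonneg (by positivity), div_le_one (by positivity)]
  nlinarith

theorem one_add_psiNeg_eq_integral [IsProbabilityMeasure μ] (hs : ∀ᵐ s ∂μ, 0 ≤ s)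
    (hx : 0 ≤ x) : 1 + psiNeg μ x = ∫ s, 1 / (1 + x * s) ∂μ := by
  have h_split : ∀ᵐ s ∂μ, 1 / (1 + x * s) = 1 - x * s / (1 + x * s) := by
    filter_upwards [hs] with s hs
    field_simp
    ring
  rw [integral_congr_ae h_split,
    integral_sub (integrable_const 1) (integrable_mul_div_one_add_mul hs hx),
    ← neg_psiNeg_eq_integral]
  simp

theorem neg_psiNeg_pos [IsProbabilityMeasure μ] (hs : ∀ᵐ s ∂μ, 0 ≤ s)
    (hμ : μ ≠ Measure.dirac 0) (hx : 0 < x) : 0 < -psiNeg μ x := by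
  have h_nonneg : 0 ≤ᵐ[μ] fun s => x * s / (1 + x * s) := by
    filter_upwards [hs] with s hs
    positivity
  rw [neg_psiNeg_eq_integral]
  refine (integral_nonneg_of_ae h_nonneg).lt_of_ne' fun h_zero => hμ ?_
  have h_ae_zero := (integral_eq_zero_iff_of_nonneg_ae h_nonneg
    (integrable_mul_div_one_add_mul hs hx.le)).mp h_zero
  refine Measure.eq_dirac_of_ae_eq ?_
  filter_upwards [hs, h_ae_zero] with s hs h_s
  have : 0 < 1 + x * s := by positivity
  simpa [hx.ne', this.ne'] using h_s

theorem one_add_psiNeg_pos [IsProbabilityMeasure μ] (hs : ∀ᵐ s ∂μ, 0 ≤ s) (hx : 0 ≤ x) :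
    0 < 1 + psiNeg μ x := by
  have h_pos : ∀ᵐ s ∂μ, 0 < 1 / (1 + x * s) := by
    filter_upwards [hs] with s hs
    positivity
  have h_nonneg : 0 ≤ᵐ[μ] fun s => 1 / (1 + x * s) := h_pos.mono fun _ => le_of_lt
  rw [one_add_psiNeg_eq_integral hs hx]
  refine (integral_nonneg_of_ae h_nonneg).lt_of_ne' fun h_zero => ?_
  have h_ae_zero := (integral_eq_zero_iff_of_nonneg_ae h_nonneg
    (integrable_one_div_one_add_mul hs hx)).mp h_zero
  obtain ⟨s, h_s_pos, h_s_zero⟩ := (h_pos.and h_ae_zero).exists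
  exact h_s_pos.ne' h_s_zero

theorem psiNeg_mem_Ioo [IsProbabilityMeasure μ] (hs : ∀ᵐ s ∂μ, 0 ≤ s)
    (hμ : μ ≠ Measure.dirac 0) (hx : 0 < x) : psiNeg μ x ∈ Ioo (-1) 0 :=
  ⟨by linarith [one_add_psiNeg_pos hs hx.le], by linarith [neg_psiNeg_pos hs hμ hx]⟩

theorem monotoneOn_neg_psiNeg [IsFiniteMeasure μ] (hs : ∀ᵐ s ∂μ, 0 ≤ s) :
    MonotoneOn (fun x => -psiNeg μ x) (Ici 0) := by
  intro x (hx : 0 ≤ x) y (hy : 0 ≤ y) hxy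
  simp only [neg_psiNeg_eq_integral]
  refine integral_mono_ae (integrable_mul_div_one_add_mul hs hx)
    (integrable_mul_div_one_add_mul hs hy) ?_
  filter_upwards [hs] with s hs
  have : x * s ≤ y * s := by gcongr
  rw [div_le_div_iff₀ (by positivity) (by positivity)]
  linarith

theorem monotoneOn_mul_one_add_psiNeg [IsProbabilityMeasure μ] (hs : ∀ᵐ s ∂μ, 0 ≤ s) :
    MonotoneOn (fun x => x * (1 + psiNeg μ x)) (Ici 0) := by
  intro x (hx : 0 ≤ x) y (hy : 0 ≤ y) hxy
  simp only [one_add_psiNeg_eq_integral hs hx, one_add_psiNeg_eq_integral hs hy,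
    ← integral_const_mul]
  refine integral_mono_ae ((integrable_one_div_one_add_mul hs hx).const_mul x)
    ((integrable_one_div_one_add_mul hs hy).const_mul y) ?_
  filter_upwards [hs] with s hs
  rw [mul_one_div, mul_one_div, div_le_div_iff₀ (by positivity) (by positivity)]
  nlinarith

theorem kappaNeg_mem_Icc [IsProbabilityMeasure μ] (hs : ∀ᵐ s ∂μ, 0 ≤ s)
    (hμ : μ ≠ Measure.dirac 0) (hx : 1 ≤ x) :
    kappaNeg μ x ∈ Icc (1 + psiNeg μ 1) ((-psiNeg μ 1)⁻¹ * x) := by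
  have hx₀ : (0 : ℝ) ≤ x := zero_le_one.trans hx
  obtain ⟨hψ₁_gt, hψ₁_lt⟩ := psiNeg_mem_Ioo hs hμ one_pos
  obtain ⟨hψ_gt, hψ_lt⟩ := psiNeg_mem_Ioo hs hμ (one_pos.trans_le hx)
  have h_num : 1 * (1 + psiNeg μ 1) ≤ x * (1 + psiNeg μ x) :=
    monotoneOn_mul_one_add_psiNeg hs (mem_Ici.2 zero_le_one) (mem_Ici.2 hx₀) hx
  have h_den : -psiNeg μ 1 ≤ -psiNeg μ x :=
    monotoneOn_neg_psiNeg hs (mem_Ici.2 zero_le_one) (mem_Ici.2 hx₀) hx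
  constructor
  · rw [kappaNeg, le_div_iff₀ (by linarith)]
    nlinarith
  · rw [kappaNeg, div_le_iff₀ (by linarith), inv_mul_eq_div, div_mul_eq_mul_div,
      le_div_iff₀ (by linarith)]
    have h : (1 + psiNeg μ x) * -psiNeg μ 1 ≤ -psiNeg μ x := by nlinarith
    nlinarith [mul_le_mul_of_nonneg_left h hx₀]

end

theorem stmt13 (μ : Measure ℝ) [IsProbabilityMeasure μ]
    (hsupp : μ (Set.Iio 0) = 0) (hμ : μ ≠ Measure.dirac 0) :
    (∀ x : ℝ, 0 < x → psiNeg μ x ∈ Set.Ioo (-1 : ℝ) 0) ∧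
    Tendsto (fun x : ℝ =>
        (1 / x) * Real.log (x * (1 + psiNeg μ x) / (-psiNeg μ x)))
      atTop (nhds 0) := by
  have hs := ae_nonneg_of_measure_Iio_eq_zero hsupp
  refine ⟨fun x hx => psiNeg_mem_Ioo hs hμ hx, ?_⟩
  refine tendsto_inv_mul_log_of_mem_Icc (f := kappaNeg μ) (one_add_psiNeg_pos hs zero_le_one)
    (inv_pos.2 (neg_psiNeg_pos hs hμ one_pos)) ?_
  filter_upwards [eventually_ge_atTop 1] with x hx
  exact kappaNeg_mem_Icc hs hμ hx
end

section
/- Let ρ be a finite positive Borel measure on the unit circle 𝕋, α ∈ ℝ, u(z) = iα + ∫_𝕋 (ζ+z)/(ζ−z) dρ(ζ) for z ∈ 𝔻, t > 1, Φ_t(z) = z·exp((t−1)u(z)), and Ω_t = {z ∈ 𝔻 : |Φ_t(z)| < 1}. Then for every z ∈ Ω_t with z ≠ 0 one has ∫_𝕋 dρ(ζ)/|ζ − z|² ≤ (log|z|) / ((|z|² − 1)(t−1)). -/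
open MeasureTheory Filter

/-- u(z) = iα + ∫_𝕋 (ζ+z)/(ζ−z) dρ(ζ). -/
noncomputable def uT (ρ : Measure ℂ) (α : ℝ) (z : ℂ) : ℂ :=
  Complex.I * (α : ℂ) + ∫ ζ : ℂ, (ζ + z) / (ζ - z) ∂ρ

/-- Φ_t(z) = z·exp((t−1)·u(z)). -/
noncomputable def PhiT (ρ : Measure ℂ) (α t : ℝ) (z : ℂ) : ℂ :=
  z * Complex.exp (((t : ℂ) - 1) * uT ρ α z)

/-!
Taking absolute values in `|Φ_t(z)| < 1` gives `|z| · exp((t-1) Re u(z)) < 1`, i.e.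
`(t-1) Re u(z) < -log |z|`. On the unit circle the real part of the Herglotz kernel
`(ζ+z)/(ζ-z)` is the Poisson kernel `(1-|z|²)/|ζ-z|²`, so `Re u(z) = (1-|z|²) ∫ dρ/|ζ-z|²`,
and dividing by the negative number `(|z|²-1)(t-1)` gives the bound.
-/

theorem Complex.re_add_div_sub_of_norm_eq_one {ζ : ℂ} (hζ : ‖ζ‖ = 1) (z : ℂ) :
    ((ζ + z) / (ζ - z)).re = (1 - ‖z‖ ^ 2) * (1 / ‖ζ - z‖ ^ 2) := by
  have hζ' : ζ.re * ζ.re + ζ.im * ζ.im = 1 := by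
    rw [← Complex.normSq_apply, ← Complex.sq_norm, hζ, one_pow]
  have hnum : (ζ + z).re * (ζ - z).re + (ζ + z).im * (ζ - z).im = 1 - ‖z‖ ^ 2 := by
    rw [Complex.sq_norm, Complex.normSq_apply]
    simp only [Complex.add_re, Complex.sub_re, Complex.add_im, Complex.sub_im]
    linear_combination hζ'
  rw [Complex.div_re, ← add_div, hnum, ← Complex.sq_norm]
  ring

theorem Complex.norm_add_div_sub_le {ζ z : ℂ} (hζ : ‖ζ‖ = 1) (hz : ‖z‖ < 1) :
    ‖(ζ + z) / (ζ - z)‖ ≤ (1 + ‖z‖) / (1 - ‖z‖) := by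
  have hnum : ‖ζ + z‖ ≤ 1 + ‖z‖ := hζ ▸ norm_add_le ζ z
  have hden : 1 - ‖z‖ ≤ ‖ζ - z‖ := hζ ▸ norm_sub_norm_le ζ z
  rw [norm_div]
  exact div_le_div₀ (by positivity) hnum (by linarith) hden

section UnitCircle

variable {ρ : Measure ℂ} (hρ : ∀ᵐ ζ ∂ρ, ‖ζ‖ = 1)
include hρ

theorem integrable_add_div_sub [IsFiniteMeasure ρ] {z : ℂ} (hz : ‖z‖ < 1) :
    Integrable (fun ζ : ℂ => (ζ + z) / (ζ - z)) ρ := by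
  refine (integrable_const ((1 + ‖z‖) / (1 - ‖z‖))).mono' ?_ ?_
  · exact ((measurable_id.add_const z).div (measurable_id.sub_const z)).aestronglyMeasurable
  · filter_upwards [hρ] with ζ hζ using Complex.norm_add_div_sub_le hζ hz

theorem re_uT_eq [IsFiniteMeasure ρ] (α : ℝ) {z : ℂ} (hz : ‖z‖ < 1) :
    (uT ρ α z).re = (1 - ‖z‖ ^ 2) * ∫ ζ : ℂ, 1 / ‖ζ - z‖ ^ 2 ∂ρ := by
  calc (uT ρ α z).re = ∫ ζ : ℂ, ((ζ + z) / (ζ - z)).re ∂ρ := by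
        rw [uT, Complex.add_re, Complex.re_mul_ofReal, Complex.I_re, zero_mul, zero_add]
        exact (integral_re (integrable_add_div_sub hρ hz)).symm
    _ = ∫ ζ : ℂ, (1 - ‖z‖ ^ 2) * (1 / ‖ζ - z‖ ^ 2) ∂ρ := by
        refine integral_congr_ae ?_
        filter_upwards [hρ] with ζ hζ using Complex.re_add_div_sub_of_norm_eq_one hζ z
    _ = (1 - ‖z‖ ^ 2) * ∫ ζ : ℂ, 1 / ‖ζ - z‖ ^ 2 ∂ρ := integral_const_mul _ _

end UnitCircle

theorem norm_PhiT (ρ : Measure ℂ) (α t : ℝ) (z : ℂ) :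
    ‖PhiT ρ α t z‖ = ‖z‖ * Real.exp ((t - 1) * (uT ρ α z).re) := by
  rw [PhiT, norm_mul, Complex.norm_exp, ← Complex.ofReal_one, ← Complex.ofReal_sub,
    Complex.re_ofReal_mul]

theorem mul_re_uT_lt_neg_log_norm {ρ : Measure ℂ} {α t : ℝ} {z : ℂ} (hz0 : z ≠ 0)
    (hΦ : ‖PhiT ρ α t z‖ < 1) :
    (t - 1) * (uT ρ α z).re < -Real.log ‖z‖ := by
  have hr : 0 < ‖z‖ := norm_pos_iff.mpr hz0
  rw [norm_PhiT, ← Real.exp_log hr, ← Real.exp_add, Real.exp_lt_one_iff] at hΦ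
  linarith

theorem stmt18 (ρ : Measure ℂ) [IsFiniteMeasure ρ]
    (hρ : ρ {z : ℂ | ‖z‖ = 1}ᶜ = 0)
    (α t : ℝ) (ht : 1 < t)
    (z : ℂ) (hz : ‖z‖ < 1) (hΦ : ‖PhiT ρ α t z‖ < 1)
    (hz0 : z ≠ 0) :
    (∫ ζ : ℂ, 1 / ‖ζ - z‖ ^ 2 ∂ρ) ≤
      Real.log (‖z‖) / ((‖z‖ ^ 2 - 1) * (t - 1)) := by
  have key := mul_re_uT_lt_neg_log_norm hz0 hΦ
  rw [re_uT_eq (ae_iff.mpr hρ) α hz] at key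
  have hden : (‖z‖ ^ 2 - 1) * (t - 1) < 0 :=
    mul_neg_of_neg_of_pos (by nlinarith [norm_nonneg z]) (by linarith)
  rw [le_div_iff_of_neg hden]
  linarith
end
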